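/- Local trace criterion: let M* be a generalized mesh, s = (S,γ) a generalized d-subfacet with S ∈ σ_d(∂M*), and suppose the projected star st_∂ s = {(F,k) ∈ ∂M* : S ⊂ F and k ∈ γ} is connected through S in the boundary adjacency graph. Then t = (S, st_∂ s) is a generalized d-subfacet of ∂M*, and the Whitney forms satisfy ω_t = ± Tr ω_s, with sign + exactly when the chosen orientations of S in M* and in ∂M* agree. -/

import Mathlib

/-- A generalized mesh: a type of elements, a realization function assigning to each element
a simplex (a finite set of vertices), and a neighbor function encoding the adjacency graph
between split facets (each split facet `(F, k)` has at most one neighbor). -/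
structure GenMesh (V : Type*) (n : ℕ) where
  Elem : Type*
  real : Elem → Finset V
  nbr : Elem → Finset V → Option Elem

namespace GenMesh

variable {V : Type*} {n : ℕ}

/-- The axioms of an `n`-dimensional generalized mesh: finitely many elements, each realized
as an `n`-simplex; the adjacency graph is symmetric, two adjacent split facets share the same
facet, belong to distinct elements, and each split facet has at most one neighbor. -/
def IsValid (M : GenMesh V n) : Prop :=
  Finite M.Elem ∧ (∀ k, (M.real k).card = n + 1) ∧
    ∀ k F k', M.nbr k F = some k' →
      k' ≠ k ∧ M.nbr k' F = some k ∧ F ⊆ M.real k ∧ F ⊆ M.real k' ∧ F.card = n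

end GenMesh
/-- A chain of distinct elements of `M` circling around the `(n-2)`-subsimplex `S`, starting
at the boundary split facet `(F0, k0)` and ending at another boundary split facet. -/
structure ChainAround {V : Type*} {n : ℕ} (M : GenMesh V n) (k0 : M.Elem) (F0 S : Finset V) where
  Q : ℕ
  hQ : 0 < Q
  ks : Fin Q → M.Elem
  Fs : Fin (Q + 1) → Finset V
  ks_inj : Function.Injective ks
  Fs_inj : Function.Injective Fs
  first_k : ks ⟨0, hQ⟩ = k0
  first_F : Fs 0 = F0
  sub_S : ∀ i, S ⊆ Fs i
  card_F : ∀ i, (Fs i).card = n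
  mem_left : ∀ q : Fin Q, Fs q.castSucc ⊆ M.real (ks q)
  mem_right : ∀ q : Fin Q, Fs q.succ ⊆ M.real (ks q)
  adj : ∀ (q : Fin Q) (h : (q : ℕ) + 1 < Q),
    M.nbr (ks q) (Fs q.succ) = some (ks ⟨(q : ℕ) + 1, h⟩)
  first_bd : M.nbr k0 F0 = none
  last_bd : M.nbr (ks ⟨Q - 1, Nat.sub_lt hQ Nat.one_pos⟩) (Fs (Fin.last Q)) = none
open Classical
/-- The generalized boundary of a generalized mesh: its elements are the boundary split
facets `(k, F)` of `M`, realized as `F`, and two boundary split facets are adjacent through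
`S` when they are the two ends of a chain of elements of `M` circling around `S`. -/

noncomputable def GenMesh.boundary {V : Type*} {n : ℕ} (M : GenMesh V (n + 1)) :
    GenMesh V n where
  Elem := {fk : M.Elem × Finset V //
    fk.2 ⊆ M.real fk.1 ∧ fk.2.card = n + 1 ∧ M.nbr fk.1 fk.2 = none}
  real := fun fk => fk.1.2
  nbr := fun fk S =>
    if h : Nonempty (ChainAround M fk.1.1 fk.1.2 S) then
      some ⟨(h.some.ks ⟨h.some.Q - 1, Nat.sub_lt h.some.hQ Nat.one_pos⟩,
             h.some.Fs (Fin.last h.some.Q)), by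
        constructor
        · have hmr := h.some.mem_right ⟨h.some.Q - 1, Nat.sub_lt h.some.hQ Nat.one_pos⟩
          have hsucc : (⟨h.some.Q - 1, Nat.sub_lt h.some.hQ Nat.one_pos⟩ : Fin h.some.Q).succ
              = Fin.last h.some.Q := by
            apply Fin.ext
            simp only [Fin.val_succ, Fin.val_last]
            have := h.some.hQ
            omega
          rwa [hsucc] at hmr
        · exact ⟨h.some.card_F _, h.some.last_bd⟩⟩
    else none
/-- `k` and `k'` lie in the same connected component of the graph `G(S)` on the generalized
star of `S`: they are linked by a chain of elements, consecutive ones being adjacent through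
a facet containing `S`. -/
def inSameComp {V : Type*} {n : ℕ} (M : GenMesh V n) (S : Set V) (k k' : M.Elem) : Prop :=
  Relation.ReflTransGen
    (fun a b => ∃ G : Finset V, S ⊆ (G : Set V) ∧
      (M.nbr a G = some b ∨ M.nbr b G = some a)) k k'
open Classical in
/-- Evaluation of the Whitney `d`-form associated to the generalized `d`-subfacet with vertex
ordering `Vs` and component `γ`: on an element `k ∈ γ` it is the alternating sum
`∑_j (-1)^j λ_{V_j} dλ_{V_0} ∧ … ∧ d̂λ_{V_j} ∧ … ∧ dλ_{V_d}`, evaluated at the point `x` on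
the tuple of vectors `v`; on elements outside `γ` it vanishes. -/
noncomputable def whitneyEval {m n : ℕ} (M : GenMesh (Fin m → ℝ) n)
    (lam : M.Elem → (Fin m → ℝ) → ((Fin m → ℝ) →ᵃ[ℝ] ℝ)) {d : ℕ}
    (Vs : Fin (d + 1) → (Fin m → ℝ)) (γ : Set M.Elem) (k : M.Elem) (x : Fin m → ℝ)
    (v : Fin d → (Fin m → ℝ)) : ℝ :=
  if k ∈ γ then
    ∑ j : Fin (d + 1), (-1 : ℝ) ^ (j : ℕ) * lam k (Vs j) x *
      Matrix.det (Matrix.of fun a b : Fin d => (lam k (Vs (j.succAbove a))).linear (v b))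
  else 0

/-- The space `Λ^d(M)` of Whitney `d`-forms on a generalized mesh: the span of the Whitney
forms associated to the generalized `d`-subfacets of `M`. -/
noncomputable def whitneyForms {m n : ℕ} (M : GenMesh (Fin m → ℝ) n)
    (lam : M.Elem → (Fin m → ℝ) → ((Fin m → ℝ) →ᵃ[ℝ] ℝ)) (d : ℕ) :
    Submodule ℝ (M.Elem → (Fin m → ℝ) → (Fin d → (Fin m → ℝ)) → ℝ) :=
  Submodule.span ℝ
    {w | ∃ (Vs : Fin (d + 1) → (Fin m → ℝ)) (k₀ : M.Elem), Function.Injective Vs ∧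
      (∀ j, Vs j ∈ M.real k₀) ∧
      w = fun k x v => whitneyEval M lam Vs {kk | inSameComp M (Set.range Vs) k₀ kk} k x v}

open Classical in
/-- `lam k v` is the barycentric coordinate function of the simplex attached to `k`
associated with its vertex `v`. -/
def IsBary {m n : ℕ} (M : GenMesh (Fin m → ℝ) n)
    (lam : M.Elem → (Fin m → ℝ) → ((Fin m → ℝ) →ᵃ[ℝ] ℝ)) : Prop :=
  ∀ k, ∀ v ∈ M.real k, ∀ w ∈ M.real k, lam k v w = if v = w then (1 : ℝ) else 0

/-- Every element of the generalized mesh is realized as a non-degenerate simplex. -/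
def GoodSimplices {m n : ℕ} (M : GenMesh (Fin m → ℝ) n) : Prop :=
  ∀ k, AffineIndependent ℝ (fun v : {x // x ∈ M.real k} => (v : Fin m → ℝ))

/-! A boundary adjacency of `∂M` through `S` is realized by a chain of elements of `M` circling
around `S`, so boundary split facets connected through `S` lie on elements connected through
`S` in `M`; together with the connectivity hypothesis this makes `st_∂ s` a whole component.

For the trace, write the Whitney form as the determinant of the matrix with rows
`(λ_{V_j}(x), dλ_{V_j}(v_1), …, dλ_{V_j}(v_d))`. On a boundary split facet `(F, k)` the
barycentric coordinates of `F` are those of `k` restricted to `F`, so when `S ⊆ F` the two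
matrices differ by the row permutation relating the two orderings of `S`. When `S ⊄ F`, some
`λ_{V_j}` vanishes on `F`, hence at `x` and along the tangent vectors `v_i`, and both sides
are `0`. -/

section Components

variable {V : Type*} {n : ℕ}

theorem inSameComp.symm {M : GenMesh V n} {S : Set V} {a b : M.Elem}
    (h : inSameComp M S a b) : inSameComp M S b a := by
  induction h with
  | refl => exact .refl
  | tail _ hstep ih =>
    obtain ⟨G, hG, hnbr⟩ := hstep
    exact ih.head ⟨G, hG, hnbr.symm⟩

theorem inSameComp.subset_real {M : GenMesh V n} (hM : M.IsValid) {S : Set V}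
    {k₀ k : M.Elem} (h₀ : S ⊆ M.real k₀) (h : inSameComp M S k₀ k) : S ⊆ M.real k := by
  induction h with
  | refl => exact h₀
  | tail _ hstep _ =>
    obtain ⟨G, hG, hnbr | hnbr⟩ := hstep
    · exact hG.trans (Finset.coe_subset.2 (hM.2.2 _ _ _ hnbr).2.2.2.1)
    · exact hG.trans (Finset.coe_subset.2 (hM.2.2 _ _ _ hnbr).2.2.1)

theorem ChainAround.inSameComp_ks {M : GenMesh V n} {k₀ : M.Elem} {F₀ S : Finset V}
    (c : ChainAround M k₀ F₀ S) {T : Set V} (hT : T ⊆ S) (q : Fin c.Q) :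
    inSameComp M T k₀ (c.ks q) := by
  obtain ⟨i, hi⟩ := q
  induction i with
  | zero =>
    rw [show (⟨0, hi⟩ : Fin c.Q) = ⟨0, c.hQ⟩ from rfl, c.first_k]
    exact .refl
  | succ i ih =>
    exact (ih (by omega)).tail
      ⟨c.Fs (Fin.succ ⟨i, by omega⟩), hT.trans (Finset.coe_subset.2 (c.sub_S _)),
        Or.inl (c.adj ⟨i, by omega⟩ hi)⟩

theorem inSameComp_of_boundary_nbr_eq_some {M : GenMesh V (n + 1)} {a b : M.boundary.Elem}
    {G : Finset V} {T : Set V} (hT : T ⊆ G) (hab : M.boundary.nbr a G = some b) :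
    inSameComp M T a.1.1 b.1.1 := by
  simp only [GenMesh.boundary] at hab
  split_ifs at hab with hc
  cases hab
  exact hc.some.inSameComp_ks hT _

theorem inSameComp.of_boundary {M : GenMesh V (n + 1)} {T : Set V} {f g : M.boundary.Elem}
    (h : inSameComp M.boundary T f g) : inSameComp M T f.1.1 g.1.1 := by
  induction h with
  | refl => exact .refl
  | tail _ hstep ih =>
    obtain ⟨G, hG, hnbr | hnbr⟩ := hstep
    · exact ih.trans (inSameComp_of_boundary_nbr_eq_some hG hnbr)
    · exact ih.trans (inSameComp_of_boundary_nbr_eq_some hG hnbr).symm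

end Components

section Whitney

variable {m n d : ℕ} {M : GenMesh (Fin m → ℝ) n}
  {lam : M.Elem → (Fin m → ℝ) → ((Fin m → ℝ) →ᵃ[ℝ] ℝ)} {Vs : Fin (d + 1) → (Fin m → ℝ)}
  {γ : Set M.Elem} {k : M.Elem} {x : Fin m → ℝ} {v : Fin d → (Fin m → ℝ)}

theorem whitneyEval_eq_det (hk : k ∈ γ) :
    whitneyEval M lam Vs γ k x v =
      Matrix.det (Matrix.of fun j i : Fin (d + 1) =>
        Fin.cons (lam k (Vs j) x) (fun b : Fin d => (lam k (Vs j)).linear (v b)) i) := by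
  rw [whitneyEval, if_pos hk, Matrix.det_succ_column_zero]
  rfl

theorem whitneyEval_eq_zero_of_vanishing (j₀ : Fin (d + 1)) (hx : lam k (Vs j₀) x = 0)
    (hv : ∀ b, (lam k (Vs j₀)).linear (v b) = 0) : whitneyEval M lam Vs γ k x v = 0 := by
  by_cases hk : k ∈ γ
  · rw [whitneyEval_eq_det hk]
    exact Matrix.det_eq_zero_of_row_eq_zero j₀ fun i => by
      refine Fin.cases ?_ (fun b => ?_) i <;> simp [hx, hv]
  · rw [whitneyEval, if_neg hk]

theorem whitneyEval_eq_sign_mul {n' : ℕ} {M' : GenMesh (Fin m → ℝ) n'}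
    {lam' : M'.Elem → (Fin m → ℝ) → ((Fin m → ℝ) →ᵃ[ℝ] ℝ)} {Ws : Fin (d + 1) → (Fin m → ℝ)}
    {γ' : Set M'.Elem} {k' : M'.Elem} (hk : k ∈ γ) (hk' : k' ∈ γ')
    (σ : Equiv.Perm (Fin (d + 1))) (hx : ∀ j, lam' k' (Ws j) x = lam k (Vs (σ j)) x)
    (hv : ∀ j b, (lam' k' (Ws j)).linear (v b) = (lam k (Vs (σ j))).linear (v b)) :
    whitneyEval M' lam' Ws γ' k' x v = Equiv.Perm.sign σ * whitneyEval M lam Vs γ k x v := by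
  rw [whitneyEval_eq_det hk, whitneyEval_eq_det hk', ← Matrix.det_permute]
  congr 1
  ext j i
  refine Fin.cases ?_ (fun b => ?_) i <;> simp [hx, hv]

end Whitney

section Trace

variable {m n d : ℕ} {M : GenMesh (Fin m → ℝ) (n + 1)}
  {lam : M.Elem → (Fin m → ℝ) → ((Fin m → ℝ) →ᵃ[ℝ] ℝ)}
  {lam' : M.boundary.Elem → (Fin m → ℝ) → ((Fin m → ℝ) →ᵃ[ℝ] ℝ)}

theorem IsBary.eqOn_boundary (hlam : IsBary M lam) (hlam' : IsBary M.boundary lam')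
    (f : M.boundary.Elem) {u : Fin m → ℝ} (hu : u ∈ f.1.2) :
    Set.EqOn (lam' f u) (lam f.1.1 u) f.1.2 := fun w hw => by
  rw [hlam' f u hu w hw, hlam f.1.1 u (f.2.1 hu) w (f.2.1 hw)]

theorem IsBary.eqOn_zero_of_notMem (hlam : IsBary M lam) (f : M.boundary.Elem)
    {u : Fin m → ℝ} (hu : u ∈ M.real f.1.1) (huf : u ∉ f.1.2) :
    Set.EqOn (lam f.1.1 u) (0 : (Fin m → ℝ) →ᵃ[ℝ] ℝ) f.1.2 := fun w hw => by
  rw [hlam f.1.1 u hu w (f.2.1 hw), if_neg (by rintro rfl; exact huf hw)]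
  rfl

theorem whitneyEval_boundary_eq_sign_mul (hlam : IsBary M lam) (hlam' : IsBary M.boundary lam')
    {Vs : Fin (d + 1) → (Fin m → ℝ)} {γ : Set M.Elem}
    (hγ : ∀ k ∈ γ, Set.range Vs ⊆ M.real k) (σ : Equiv.Perm (Fin (d + 1)))
    (f : M.boundary.Elem) {x : Fin m → ℝ} (hx : x ∈ convexHull ℝ (f.1.2 : Set (Fin m → ℝ)))
    {v : Fin d → (Fin m → ℝ)} (hv : ∀ i, v i ∈ vectorSpan ℝ (f.1.2 : Set (Fin m → ℝ))) :
    whitneyEval M.boundary lam' (Vs ∘ σ)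
        {f | Set.range Vs ⊆ (f.1.2 : Set (Fin m → ℝ)) ∧ f.1.1 ∈ γ} f x v =
      Equiv.Perm.sign σ * whitneyEval M lam Vs γ f.1.1 x v := by
  have hx' := convexHull_subset_affineSpan _ hx
  by_cases hk : f.1.1 ∈ γ
  · by_cases hS : Set.range Vs ⊆ (f.1.2 : Set (Fin m → ℝ))
    · have hVs : ∀ j, Set.EqOn (lam' f (Vs j)) (lam f.1.1 (Vs j)) f.1.2 := fun j =>
        hlam.eqOn_boundary hlam' f (hS (Set.mem_range_self j))
      exact whitneyEval_eq_sign_mul hk (by exact ⟨hS, hk⟩) σ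
        (fun j => AffineMap.eqOn_affineSpan (hVs (σ j)) hx')
        (fun j b => AffineMap.linear_eqOn_vectorSpan (hVs (σ j)) (hv b))
    · obtain ⟨_, ⟨j₀, rfl⟩, hj₀⟩ := Set.not_subset.1 hS
      have hzero := hlam.eqOn_zero_of_notMem f (hγ _ hk ⟨j₀, rfl⟩) hj₀
      have hvanish : whitneyEval M lam Vs γ f.1.1 x v = 0 :=
        whitneyEval_eq_zero_of_vanishing j₀ (by simpa using AffineMap.eqOn_affineSpan hzero hx')
          fun b => by simpa using AffineMap.linear_eqOn_vectorSpan hzero (hv b)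
      rw [hvanish, mul_zero, whitneyEval, if_neg fun h => hS h.1]
  · rw [whitneyEval, whitneyEval, if_neg hk, if_neg fun h => hk h.2, mul_zero]

end Trace

theorem stmt15_general {m n d : ℕ} (M : GenMesh (Fin m → ℝ) (n + 1)) (hM : M.IsValid)
    (lam : M.Elem → (Fin m → ℝ) → ((Fin m → ℝ) →ᵃ[ℝ] ℝ)) (hlam : IsBary M lam)
    (lam' : M.boundary.Elem → (Fin m → ℝ) → ((Fin m → ℝ) →ᵃ[ℝ] ℝ))
    (hlam' : IsBary M.boundary lam')
    (Vs : Fin (d + 1) → (Fin m → ℝ))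
    (k₀ : M.Elem) (hk₀ : ∀ j, Vs j ∈ M.real k₀)
    (γ : Set M.Elem) (hγ : γ = {kk | inSameComp M (Set.range Vs) k₀ kk})
    (stps : Set M.boundary.Elem)
    (hstps : stps = {f | Set.range Vs ⊆ (f.1.2 : Set (Fin m → ℝ)) ∧ f.1.1 ∈ γ})
    (hconn : ∀ f ∈ stps, ∀ f' ∈ stps,
      Relation.ReflTransGen (fun a b => a ∈ stps ∧ b ∈ stps ∧
        ∃ G : Finset (Fin m → ℝ), Set.range Vs ⊆ (G : Set (Fin m → ℝ)) ∧
          (M.boundary.nbr a G = some b ∨ M.boundary.nbr b G = some a)) f f')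
    (Ws : Fin (d + 1) → (Fin m → ℝ)) :
    (∀ f ∈ stps, ∀ f' : M.boundary.Elem,
        Set.range Vs ⊆ (f'.1.2 : Set (Fin m → ℝ)) →
          (inSameComp M.boundary (Set.range Vs) f f' ↔ f' ∈ stps)) ∧
    ((∃ σ : Equiv.Perm (Fin (d + 1)), Equiv.Perm.sign σ = 1 ∧ Ws = Vs ∘ σ) →
      ∀ f : M.boundary.Elem, ∀ x ∈ convexHull ℝ (f.1.2 : Set (Fin m → ℝ)),
        ∀ v : Fin d → (Fin m → ℝ),
          (∀ i, v i ∈ vectorSpan ℝ (f.1.2 : Set (Fin m → ℝ))) →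
            whitneyEval M.boundary lam' Ws stps f x v
              = whitneyEval M lam Vs γ f.1.1 x v) ∧
    ((∃ σ : Equiv.Perm (Fin (d + 1)), Equiv.Perm.sign σ = -1 ∧ Ws = Vs ∘ σ) →
      ∀ f : M.boundary.Elem, ∀ x ∈ convexHull ℝ (f.1.2 : Set (Fin m → ℝ)),
        ∀ v : Fin d → (Fin m → ℝ),
          (∀ i, v i ∈ vectorSpan ℝ (f.1.2 : Set (Fin m → ℝ))) →
            whitneyEval M.boundary lam' Ws stps f x v
              = - whitneyEval M lam Vs γ f.1.1 x v) := by
  subst hγ hstps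
  have hγS : ∀ k ∈ {kk | inSameComp M (Set.range Vs) k₀ kk}, Set.range Vs ⊆ M.real k :=
    fun _ hk => inSameComp.subset_real hM (Set.range_subset_iff.2 hk₀) hk
  refine ⟨fun f hf f' hf' => ⟨fun h => ⟨hf', hf.2.trans h.of_boundary⟩, fun h => ?_⟩, ?_, ?_⟩
  · exact Relation.ReflTransGen.mono (fun _ _ hab => hab.2.2) _ _ (hconn f hf f' h)
  · rintro ⟨σ, hσ, rfl⟩ f x hx v hv
    simpa [hσ] using whitneyEval_boundary_eq_sign_mul hlam hlam' hγS σ f hx hv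
  · rintro ⟨σ, hσ, rfl⟩ f x hx v hv
    simpa [hσ] using whitneyEval_boundary_eq_sign_mul hlam hlam' hγS σ f hx hv

/-- local trace criterion. Let `M` be a generalized mesh, `s = (S, γ)` a
generalized `d`-subfacet of `M` with `S ∈ σ_d(∂M)` (ordering `Vs`), and suppose the
projected star `st_∂ s = {(F,k) ∈ ∂M : S ⊆ F, k ∈ γ}` is nonempty and connected through `S`
in the boundary adjacency graph.  Then `t = (S, st_∂ s)` is a generalized `d`-subfacet of
`∂M` (i.e. `st_∂ s` is a connected component of the graph on the star of `S` in `∂M`), and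
the Whitney forms satisfy `ω_t = ± Tr ω_s`, with sign `+` exactly when the chosen
orientations `Ws` (in `∂M`) and `Vs` (in `M`) of `S` agree. -/
theorem stmt15 {m n d : ℕ} (M : GenMesh (Fin m → ℝ) (n + 1)) (hM : M.IsValid)
    (hgood : GoodSimplices M) (hgoodB : GoodSimplices M.boundary)
    (lam : M.Elem → (Fin m → ℝ) → ((Fin m → ℝ) →ᵃ[ℝ] ℝ)) (hlam : IsBary M lam)
    (lam' : M.boundary.Elem → (Fin m → ℝ) → ((Fin m → ℝ) →ᵃ[ℝ] ℝ))
    (hlam' : IsBary M.boundary lam')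
    (Vs : Fin (d + 1) → (Fin m → ℝ)) (hVs : Function.Injective Vs)
    (k₀ : M.Elem) (hk₀ : ∀ j, Vs j ∈ M.real k₀)
    (γ : Set M.Elem) (hγ : γ = {kk | inSameComp M (Set.range Vs) k₀ kk})
    (stps : Set M.boundary.Elem)
    (hstps : stps = {f | Set.range Vs ⊆ (f.1.2 : Set (Fin m → ℝ)) ∧ f.1.1 ∈ γ})
    (hne : stps.Nonempty)
    (hconn : ∀ f ∈ stps, ∀ f' ∈ stps,
      Relation.ReflTransGen (fun a b => a ∈ stps ∧ b ∈ stps ∧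
        ∃ G : Finset (Fin m → ℝ), Set.range Vs ⊆ (G : Set (Fin m → ℝ)) ∧
          (M.boundary.nbr a G = some b ∨ M.boundary.nbr b G = some a)) f f')
    (Ws : Fin (d + 1) → (Fin m → ℝ)) (hWs : Function.Injective Ws)
    (hWsVs : Set.range Ws = Set.range Vs) :
    (∀ f ∈ stps, ∀ f' : M.boundary.Elem,
        Set.range Vs ⊆ (f'.1.2 : Set (Fin m → ℝ)) →
          (inSameComp M.boundary (Set.range Vs) f f' ↔ f' ∈ stps)) ∧
    ((∃ σ : Equiv.Perm (Fin (d + 1)), Equiv.Perm.sign σ = 1 ∧ Ws = Vs ∘ σ) →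
      ∀ f : M.boundary.Elem, ∀ x ∈ convexHull ℝ (f.1.2 : Set (Fin m → ℝ)),
        ∀ v : Fin d → (Fin m → ℝ),
          (∀ i, v i ∈ vectorSpan ℝ (f.1.2 : Set (Fin m → ℝ))) →
            whitneyEval M.boundary lam' Ws stps f x v
              = whitneyEval M lam Vs γ f.1.1 x v) ∧
    ((∃ σ : Equiv.Perm (Fin (d + 1)), Equiv.Perm.sign σ = -1 ∧ Ws = Vs ∘ σ) →
      ∀ f : M.boundary.Elem, ∀ x ∈ convexHull ℝ (f.1.2 : Set (Fin m → ℝ)),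
        ∀ v : Fin d → (Fin m → ℝ),
          (∀ i, v i ∈ vectorSpan ℝ (f.1.2 : Set (Fin m → ℝ))) →
            whitneyEval M.boundary lam' Ws stps f x v
              = - whitneyEval M lam Vs γ f.1.1 x v) :=
  stmt15_general M hM lam hlam lam' hlam' Vs k₀ hk₀ γ hγ stps hstps hconn Ws
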